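/- arXiv:2405.19023 — 4 statements merged into one kernel-verified Lean document; each statement's English description precedes it below -/
import Mathlib

section
/- Let A be an Artin algebra and I an ideal of mod A. The smallest torsion ideal I(I) containing I equals the class of all morphisms φ : M → N such that φ∘f ∈ I for every morphism f : A → M. In particular, I(I) is uniquely determined by the restriction I(A, −). -/
open CategoryTheory

universe u

variable (k : Type u) [CommRing k] [IsArtinianRing k]
variable (A : Type u) [Ring A] [Algebra k A] [Module.Finite k A]

/-- A class of morphisms of `mod A`, the category of finitely generated `A`-modules. -/
abbrev MorClass := ∀ (M N : FGModuleCat A), Set (M ⟶ N)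

/-- An ideal of `mod A`: a class of morphisms closed under addition of parallel morphisms
and under composition with arbitrary morphisms on either side. -/
def IsMorIdeal (I : MorClass A) : Prop :=
  (∀ {M N : FGModuleCat A} {f g : M ⟶ N}, f ∈ I M N → g ∈ I M N → f + g ∈ I M N) ∧
  (∀ {M N P : FGModuleCat A} (f : M ⟶ N) {g : N ⟶ P}, g ∈ I N P → f ≫ g ∈ I M P) ∧
  (∀ {M N P : FGModuleCat A} {f : M ⟶ N} (g : N ⟶ P), f ∈ I M N → f ≫ g ∈ I M P)

/-- `I^⊥`: all morphisms `ψ` with `ψ ∘ φ = 0` for every `φ ∈ I`. -/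
def rightPerp (I : MorClass A) : MorClass A :=
  fun N P => {ψ | ∀ (M : FGModuleCat A) (φ : M ⟶ N), φ ∈ I M N → φ ≫ ψ = 0}

/-- `⊥J`: all morphisms `φ` with `ψ ∘ φ = 0` for every `ψ ∈ J`. -/
def leftPerp (J : MorClass A) : MorClass A :=
  fun M N => {φ | ∀ (P : FGModuleCat A) (ψ : N ⟶ P), ψ ∈ J N P → φ ≫ ψ = 0}

/-- `(I, J)` is an ideal torsion pair. -/
def IsIdealTorsionPair (I J : MorClass A) : Prop :=
  IsMorIdeal A I ∧ IsMorIdeal A J ∧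
  (∀ {M N P : FGModuleCat A} (φ : M ⟶ N) (ψ : N ⟶ P), φ ∈ I M N → ψ ∈ J N P → φ ≫ ψ = 0) ∧
  (∀ M : FGModuleCat A, ∃ (L N : FGModuleCat A) (φ : L ⟶ M) (ψ : M ⟶ N),
    φ ∈ I L M ∧ ψ ∈ J M N ∧ Function.Injective φ ∧ Function.Surjective ψ ∧
    LinearMap.range φ.hom.hom = LinearMap.ker ψ.hom.hom)

/-- `I` is a torsion ideal: an ideal such that `φ ∘ f ∈ I` for an epimorphism `f`
implies `φ ∈ I`. -/
def IsTorsionIdeal (I : MorClass A) : Prop :=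
  IsMorIdeal A I ∧
  ∀ (L M N : FGModuleCat A) (f : L ⟶ M) (φ : M ⟶ N),
    Function.Surjective f → f ≫ φ ∈ I L N → φ ∈ I M N

/-- The class of all morphisms `φ : M → N` such that `φ ∘ f ∈ I` for every `f : A → M`. -/
def genTorsion (I : MorClass A) : MorClass A :=
  fun M N => {φ | ∀ f : FGModuleCat.of A A ⟶ M, f ≫ φ ∈ I (FGModuleCat.of A A) N}

/-- The smallest torsion ideal containing an ideal `I` equals the class of morphisms
`φ : M → N` with `φ ∘ f ∈ I` for all `f : A → M`; in particular it is determined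
by `I(A, −)`. -/
theorem smallest_torsionIdeal_eq_genTorsion (I : MorClass A) (hI : IsMorIdeal A I) :
    IsTorsionIdeal A (genTorsion A I) ∧
    (∀ M N : FGModuleCat A, I M N ⊆ genTorsion A I M N) ∧
    (∀ K : MorClass A, IsTorsionIdeal A K → (∀ M N : FGModuleCat A, I M N ⊆ K M N) →
      ∀ M N : FGModuleCat A, genTorsion A I M N ⊆ K M N) := by
  obtain ⟨hadd, hleft, hright⟩ := hI
  refine ⟨⟨⟨?_, ?_, ?_⟩, ?_⟩, ?_, ?_⟩
  · -- additivity
    intro M N f g hf hg h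
    rw [Preadditive.comp_add]
    exact hadd (hf h) (hg h)
  · -- left composition
    intro M N P f g hg h
    rw [← Category.assoc]
    exact hg (h ≫ f)
  · -- right composition
    intro M N P f g hf h
    rw [← Category.assoc]
    exact hright g (hf h)
  · -- torsion property
    intro L M N f φ hf hφ h
    obtain ⟨l, hl⟩ := hf (h (1 : A))
    have hcomm : (ConcreteCategory.ofHom (LinearMap.toSpanSingleton A L l) : FGModuleCat.of A A ⟶ L) ≫ f = h := by
      apply FGModuleCat.hom_ext
      refine LinearMap.ext_ring ?_
      show f (LinearMap.toSpanSingleton A L l (1 : A)) = h (1 : A)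
      rw [LinearMap.toSpanSingleton_apply, one_smul, hl]
    rw [← hcomm, Category.assoc]
    exact hφ _
  · -- I ⊆ genTorsion I
    intro M N φ hφ h
    exact hleft h hφ
  · -- minimality
    intro K hK hIK M N φ hφ
    obtain ⟨⟨Kadd, Kleft, Kright⟩, Ktor⟩ := hK
    obtain ⟨n, s, hs⟩ := Module.Finite.exists_fin (R := A) (M := M)
    set m := n + 1 with hm
    let g : Fin m → M := fun i => if h : (i : ℕ) < n then s ⟨i, h⟩ else 0
    have hg : Submodule.span A (Set.range g) = ⊤ := by
      rw [eq_top_iff, ← hs]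
      refine Submodule.span_mono ?_
      rintro x ⟨i, rfl⟩
      exact ⟨⟨(i : ℕ), i.2.trans (Nat.lt_succ_self n)⟩, by simp [g]⟩
    let P : FGModuleCat A := FGModuleCat.of A (Fin m → A)
    let p : P ⟶ M := ConcreteCategory.ofHom (Fintype.linearCombination A g)
    let π : ∀ _ : Fin m, P ⟶ FGModuleCat.of A A := fun i => ConcreteCategory.ofHom (LinearMap.proj i)
    let ι : ∀ _ : Fin m, FGModuleCat.of A A ⟶ P := fun i => ConcreteCategory.ofHom (LinearMap.single A (fun _ => A) i)
    have hsurj : Function.Surjective p := by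
      change Function.Surjective p.hom.hom
      rw [← LinearMap.range_eq_top (f := p.hom.hom)]
      rw [show p.hom.hom = Fintype.linearCombination A g from rfl,
        Fintype.range_linearCombination, hg]
    have key : p ≫ φ = ∑ i : Fin m, π i ≫ (ι i ≫ (p ≫ φ)) := by
      apply FGModuleCat.hom_ext
      apply LinearMap.ext
      intro x
      refine Eq.trans (b := ∑ i : Fin m, (π i ≫ (ι i ≫ (p ≫ φ))).hom.hom x) ?_ (by
        rw [show (∑ i : Fin m, π i ≫ (ι i ≫ (p ≫ φ))).hom = ∑ i : Fin m, (π i ≫ (ι i ≫ (p ≫ φ))).hom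
          from (ModuleCat.isFG A).ι.map_sum _ _, ModuleCat.hom_sum, LinearMap.sum_apply])
      show φ (p x) = ∑ i, φ (p (ι i (π i x)))
      have : ∀ i, p (ι i (π i x)) = x i • g i := by
        intro i
        show Fintype.linearCombination A g (Pi.single i (x i)) = x i • g i
        simp
      simp_rw [this]
      rw [← map_sum]
      congr 1
    have hpφ : p ≫ φ ∈ K P N := by
      rw [key]
      refine Finset.sum_induction_nonempty _ (· ∈ K P N) (fun a b ha hb => Kadd ha hb)
        Finset.univ_nonempty ?_
      intro i _
      refine Kleft (π i) ?_
      rw [← Category.assoc]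
      exact hIK _ _ (hφ (ι i ≫ p))
    exact Ktor P M N p φ hsurj hpφ
end

section
/- Let A be an Artin algebra, (I, J) an ideal torsion pair, and suppose J is functorially finite with right J-approximation ψ : C → D(A^op) of the injective cogenerator. Then I is left C-determined: for every morphism φ : M → N, if f∘φ ∈ I for all morphisms f : N → C, then φ ∈ I. -/
open CategoryTheory

universe u

variable (k : Type u) [CommRing k] [IsArtinianRing k]
variable (A : Type u) [Ring A] [Algebra k A] [Module.Finite k A]

/-- `φ : M → C` is a left `I`-approximation of `M`: it lies in `I` and every morphism
in `I` starting at `M` factors through it. -/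
def IsLeftApprox (I : MorClass A) {M C : FGModuleCat A} (φ : M ⟶ C) : Prop :=
  φ ∈ I M C ∧ ∀ (X : FGModuleCat A) (f : M ⟶ X), f ∈ I M X → ∃ g : C ⟶ X, φ ≫ g = f

/-- `ψ : C → N` is a right `I`-approximation of `N`: it lies in `I` and every morphism
in `I` ending at `N` factors through it. -/
def IsRightApprox (I : MorClass A) {C N : FGModuleCat A} (ψ : C ⟶ N) : Prop :=
  ψ ∈ I C N ∧ ∀ (X : FGModuleCat A) (f : X ⟶ N), f ∈ I X N → ∃ g : X ⟶ C, g ≫ ψ = f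

/-- Let `(I, J)` be an ideal torsion pair and suppose `J` is functorially finite, with a
right `J`-approximation `ψ : C → DA` of the minimal injective cogenerator `DA = D(A^op)`.
Then `I` is left `C`-determined: if `f ∘ φ ∈ I` for all `f : N → C`, then `φ ∈ I`. -/
theorem leftDetermined_of_rightApprox_cogenerator (I J : MorClass A)
    (h : IsIdealTorsionPair A I J)
    (DA : FGModuleCat A) (hDAinj : Injective DA)
    (hcogen : ∀ M : FGModuleCat A, ∃ (n : ℕ)
      (ι : M ⟶ FGModuleCat.of A (Fin n → DA)), Function.Injective ι)
    (hcov : ∀ M : FGModuleCat A, ∃ (X : FGModuleCat A) (f : M ⟶ X), IsLeftApprox A J f)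
    (hcontra : ∀ N : FGModuleCat A, ∃ (X : FGModuleCat A) (g : X ⟶ N), IsRightApprox A J g)
    (C : FGModuleCat A) (ψ : C ⟶ DA) (hψ : IsRightApprox A J ψ) :
    ∀ (M N : FGModuleCat A) (φ : M ⟶ N),
      (∀ f : N ⟶ C, φ ≫ f ∈ I M C) → φ ∈ I M N := by
  obtain ⟨hI, hJ, hIJ, hseq⟩ := h
  intro M N φ hφ
  -- Step 1: φ is killed on the right by everything in J
  have key : ∀ (P : FGModuleCat A) (ψ' : N ⟶ P), ψ' ∈ J N P → φ ≫ ψ' = 0 := by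
    intro P ψ' hψ'
    obtain ⟨n, ι, hι⟩ := hcogen P
    have hzero : ∀ i : Fin n,
        φ ≫ ψ' ≫ ι ≫ (ConcreteCategory.ofHom (LinearMap.proj i : (Fin n → DA) →ₗ[A] DA) : FGModuleCat.of A (Fin n → DA) ⟶ DA) = 0 := by
      intro i
      have hmem : ψ' ≫ ι ≫ (ConcreteCategory.ofHom (LinearMap.proj i : (Fin n → DA) →ₗ[A] DA) : FGModuleCat.of A (Fin n → DA) ⟶ DA) ∈ J N DA :=
        hJ.2.2 _ hψ'
      obtain ⟨g, hg⟩ := hψ.2 N _ hmem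
      have : φ ≫ g ≫ ψ = 0 := by
        rw [← Category.assoc]
        exact hIJ _ _ (hφ g) hψ.1
      rw [← hg, ← Category.assoc]
      simpa using this
    have hcomp : φ ≫ ψ' ≫ ι = 0 := by
      ext x
      have : ∀ i : Fin n, (φ ≫ ψ' ≫ ι ≫ (ConcreteCategory.ofHom (LinearMap.proj i : (Fin n → DA) →ₗ[A] DA) : FGModuleCat.of A (Fin n → DA) ⟶ DA)) x = 0 := by
        intro i; rw [hzero i]; rfl
      rename_i i
      exact this i
    ext x
    show ψ' (φ x) = 0
    apply hι
    rw [map_zero]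
    exact congrArg (fun (f : M ⟶ FGModuleCat.of A (Fin n → DA)) => f x) hcomp
  -- Step 2: use the canonical sequence of N
  obtain ⟨L, Q, a, b, haI, hbJ, hainj, _, hrange⟩ := hseq N
  have hφb : φ ≫ b = 0 := key Q b hbJ
  have hsub : ∀ x : M, φ x ∈ LinearMap.range a.hom.hom := by
    intro x
    rw [hrange]
    have := congrArg (fun (f : M ⟶ Q) => f x) hφb
    exact this
  let e := LinearEquiv.ofInjective a.hom.hom hainj
  let χ : M ⟶ L := ConcreteCategory.ofHom ((e.symm.toLinearMap).comp (LinearMap.codRestrict (LinearMap.range a.hom.hom) φ.hom.hom hsub))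
  have hfac : χ ≫ a = φ := by
    ext x
    show a (e.symm (LinearMap.codRestrict (LinearMap.range a.hom.hom) φ.hom.hom hsub x)) = φ x
    exact LinearEquiv.ofInjective_symm_apply (f := a.hom.hom) (h := hainj) _
  rw [← hfac]
  exact hI.2.1 χ haI
end

section
/- Let A be an Artin algebra and (I, J) an ideal torsion pair with corresponding subfunctor t of the identity. Then I = ⟨ob I⟩ and J = ⟨ob J⟩ both hold if and only if (ob I, ob J) is a torsion pair in mod A (i.e., Hom_A(ob I, ob J) = 0 and every module M admits a short exact sequence 0 → T → M → F → 0 with T ∈ ob I, F ∈ ob J). -/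
open CategoryTheory

universe u

variable (k : Type u) [CommRing k] [IsArtinianRing k]
variable (A : Type u) [Ring A] [Algebra k A] [Module.Finite k A]

/-- `⟨C⟩`: the ideal of all morphisms factoring through an object of the class `C`. -/
def factorClass (C : Set (FGModuleCat A)) : MorClass A :=
  fun M N => {φ | ∃ X : FGModuleCat A, X ∈ C ∧ ∃ (g : M ⟶ X) (h : X ⟶ N), g ≫ h = φ}

/-- `ob I`: the class of modules whose identity morphism belongs to `I`. -/
def obClass (I : MorClass A) : Set (FGModuleCat A) := {M | 𝟙 M ∈ I M M}

section Aux

variable {A}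

/-- Factoring through an injective morphism. -/
lemma factor_inj {M N T : FGModuleCat A} (f : M ⟶ N) (i : T ⟶ N) (hi : Function.Injective i)
    (hr : LinearMap.range f.hom.hom ≤ LinearMap.range i.hom.hom) :
    ∃ f' : M ⟶ T, f' ≫ i = f := by
  let e := LinearEquiv.ofInjective i.hom.hom hi
  refine ⟨ConcreteCategory.ofHom (e.symm.toLinearMap.comp (f.hom.hom.codRestrict (LinearMap.range i.hom.hom)
    (fun x => hr ⟨x, rfl⟩))), ?_⟩
  apply FGModuleCat.hom_ext; apply LinearMap.ext; intro x
  show i.hom.hom (e.symm ⟨f.hom.hom x, _⟩) = f.hom.hom x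
  have : ∀ y : LinearMap.range i.hom.hom, i.hom.hom (e.symm y) = y := by
    intro y
    conv_rhs => rw [← e.apply_symm_apply y]
    rfl
  exact this ⟨f.hom.hom x, hr ⟨x, rfl⟩⟩

/-- Factoring through a surjective morphism. -/
lemma factor_surj {M N F : FGModuleCat A} (ψ : M ⟶ N) (p : M ⟶ F) (hp : Function.Surjective p)
    (hk : LinearMap.ker p.hom.hom ≤ LinearMap.ker ψ.hom.hom) :
    ∃ ψ' : F ⟶ N, p ≫ ψ' = ψ := by
  let e := p.hom.hom.quotKerEquivOfSurjective hp
  refine ⟨ConcreteCategory.ofHom ((Submodule.liftQ _ ψ.hom.hom hk).comp e.symm.toLinearMap), ?_⟩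
  apply FGModuleCat.hom_ext; apply LinearMap.ext; intro x
  show Submodule.liftQ _ _ hk (e.symm (p.hom.hom x)) = ψ.hom.hom x
  have h1 : e (Submodule.Quotient.mk x) = p.hom.hom x := by
    simp [e, LinearMap.quotKerEquivOfSurjective, LinearMap.quotKerEquivRange]
  rw [← h1, e.symm_apply_apply]
  rfl

lemma comp_mem_of_id_mem {I : MorClass A} (hI : IsMorIdeal A I) {M X N : FGModuleCat A}
    (hX : 𝟙 X ∈ I X X) (g : M ⟶ X) (h : X ⟶ N) : g ≫ h ∈ I M N := by
  have : 𝟙 X ≫ h ∈ I X N := hI.2.2 h hX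
  rw [Category.id_comp] at this
  exact hI.2.1 g this

end Aux

/-- For an ideal torsion pair `(I, J)`: `I = ⟨ob I⟩` and `J = ⟨ob J⟩` both hold iff
`(ob I, ob J)` is a torsion pair in `mod A`. -/
theorem factorEq_iff_torsionPair (I J : MorClass A) (h : IsIdealTorsionPair A I J) :
    ((∀ M N : FGModuleCat A, I M N = factorClass A (obClass A I) M N) ∧
     (∀ M N : FGModuleCat A, J M N = factorClass A (obClass A J) M N)) ↔
    ((∀ T ∈ obClass A I, ∀ F ∈ obClass A J, ∀ f : T ⟶ F, f = 0) ∧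
     (∀ M : FGModuleCat A, ∃ (T F : FGModuleCat A) (i : T ⟶ M) (p : M ⟶ F),
       T ∈ obClass A I ∧ F ∈ obClass A J ∧ Function.Injective i ∧ Function.Surjective p ∧
       LinearMap.range i.hom.hom = LinearMap.ker p.hom.hom)) := by
  obtain ⟨hI, hJ, horth, hseq⟩ := h
  constructor
  · rintro ⟨hIfac, hJfac⟩
    constructor
    · -- Hom vanishing
      intro T hT F hF f
      have hfI : f ∈ I T F := by
        have := comp_mem_of_id_mem hI hT (𝟙 T) f
        rwa [Category.id_comp] at this
      have := horth f (𝟙 F) hfI hF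
      rwa [Category.comp_id] at this
    · -- torsion sequence with objects
      intro M
      obtain ⟨L, N, φ, ψ, hφ, hψ, hinj, hsurj, hex⟩ := hseq M
      -- L ∈ ob I
      have hφfac : φ ∈ factorClass A (obClass A I) L M := (hIfac L M) ▸ hφ
      obtain ⟨X, hX, g, hm, hgh⟩ := hφfac
      have hmI : hm ∈ I X M := by
        have := comp_mem_of_id_mem hI hX (𝟙 X) hm
        rwa [Category.id_comp] at this
      have hmψ : hm ≫ ψ = 0 := horth hm ψ hmI hψ
      have hrange : LinearMap.range hm.hom.hom ≤ LinearMap.range φ.hom.hom := by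
        rw [hex]
        rintro x ⟨y, rfl⟩
        exact ConcreteCategory.congr_hom hmψ y
      obtain ⟨h', hh'⟩ := factor_inj hm φ hinj hrange
      have hid : g ≫ h' = 𝟙 L := by
        apply FGModuleCat.hom_ext; apply LinearMap.ext; intro x
        apply hinj
        have : ((g ≫ h') ≫ φ) x = φ x := by
          rw [Category.assoc, hh']
          exact ConcreteCategory.congr_hom hgh x
        exact this
      have hLob : L ∈ obClass A I := by
        have : g ≫ h' ∈ I L L := comp_mem_of_id_mem hI hX g h'
        rwa [hid] at this
      -- N ∈ ob J
      have hψfac : ψ ∈ factorClass A (obClass A J) M N := (hJfac M N) ▸ hψ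
      obtain ⟨Y, hY, p, q, hpq⟩ := hψfac
      have hpJ : p ∈ J M Y := by
        have := hJ.2.1 p hY
        rwa [Category.comp_id] at this
      have hφp : φ ≫ p = 0 := horth φ p hφ hpJ
      have hker : LinearMap.ker ψ.hom.hom ≤ LinearMap.ker p.hom.hom := by
        rw [← hex]
        rintro x ⟨y, rfl⟩
        exact ConcreteCategory.congr_hom hφp y
      obtain ⟨p', hp'⟩ := factor_surj p ψ hsurj hker
      have hidN : p' ≫ q = 𝟙 N := by
        apply FGModuleCat.hom_ext; apply LinearMap.ext; intro y
        obtain ⟨x, rfl⟩ := hsurj y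
        have : (ψ ≫ (p' ≫ q)) x = ψ x := by
          rw [← Category.assoc, hp']
          exact ConcreteCategory.congr_hom hpq x
        exact this
      have hNob : N ∈ obClass A J := by
        have : p' ≫ q ∈ J N N := comp_mem_of_id_mem hJ hY p' q
        rwa [hidN] at this
      exact ⟨L, N, φ, ψ, hLob, hNob, hinj, hsurj, hex⟩
  · rintro ⟨hvan, hses⟩
    constructor
    · intro M N
      ext φ
      constructor
      · intro hφ
        obtain ⟨T, F, i, p, hT, hF, hiinj, hpsurj, hex⟩ := hses N
        have hpJ : p ∈ J N F := by
          have := hJ.2.1 p hF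
          rwa [Category.comp_id] at this
        have hφp : φ ≫ p = 0 := horth φ p hφ hpJ
        have hrange : LinearMap.range φ.hom.hom ≤ LinearMap.range i.hom.hom := by
          rw [hex]
          rintro x ⟨y, rfl⟩
          exact ConcreteCategory.congr_hom hφp y
        obtain ⟨φ', hφ'⟩ := factor_inj φ i hiinj hrange
        exact ⟨T, hT, φ', i, hφ'⟩
      · rintro ⟨X, hX, g, hm, rfl⟩
        exact comp_mem_of_id_mem hI hX g hm
    · intro M N
      ext ψ
      constructor
      · intro hψ
        obtain ⟨T, F, i, p, hT, hF, hiinj, hpsurj, hex⟩ := hses M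
        have hiI : i ∈ I T M := by
          have := comp_mem_of_id_mem hI hT (𝟙 T) i
          rwa [Category.id_comp] at this
        have hiψ : i ≫ ψ = 0 := horth i ψ hiI hψ
        have hker : LinearMap.ker p.hom.hom ≤ LinearMap.ker ψ.hom.hom := by
          rw [← hex]
          rintro x ⟨y, rfl⟩
          exact ConcreteCategory.congr_hom hiψ y
        obtain ⟨ψ', hψ'⟩ := factor_surj ψ p hpsurj hker
        exact ⟨F, hF, p, ψ', hψ'⟩
      · rintro ⟨Y, hY, g, hm, rfl⟩
        exact comp_mem_of_id_mem hJ hY g hm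
end

section
/- Let A be an Artin algebra and C, C′ full additive subcategories of mod A. Then the ideal-extension ⟨C⟩ ⋄ ⟨C′⟩ equals ⟨C ⋄ C′⟩, where C ⋄ C′ is the class of modules M admitting a short exact sequence 0 → L → M → N → 0 with L ∈ C and N ∈ C′. -/
open CategoryTheory

universe u

variable (k : Type u) [CommRing k] [IsArtinianRing k]
variable (A : Type u) [Ring A] [Algebra k A] [Module.Finite k A]

/-- The extension `I ⋄ I'` of ideals: morphisms `f : X → Y` admitting a commutative
diagram through a short exact sequence `0 → L → M → N → 0` with `f = g ∘ h`,
`π ∘ h ∈ I'` and `g ∘ ι ∈ I`. -/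
def diamondClass (I I' : MorClass A) : MorClass A :=
  fun X Y => {f | ∃ (L M N : FGModuleCat A) (ι : L ⟶ M) (π : M ⟶ N)
      (h : X ⟶ M) (g : M ⟶ Y),
    Function.Injective ι ∧ Function.Surjective π ∧ LinearMap.range ι.hom.hom = LinearMap.ker π.hom.hom ∧
    f = h ≫ g ∧ h ≫ π ∈ I' X N ∧ ι ≫ g ∈ I L Y}

/-- The extension `C ⋄ C'` of classes of modules: modules `M` admitting a short exact
sequence `0 → L → M → N → 0` with `L ∈ C` and `N ∈ C'`. -/
def objDiamond (C C' : Set (FGModuleCat A)) : Set (FGModuleCat A) :=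
  {M | ∃ (L N : FGModuleCat A) (ι : L ⟶ M) (π : M ⟶ N),
    L ∈ C ∧ N ∈ C' ∧ Function.Injective ι ∧ Function.Surjective π ∧
    LinearMap.range ι.hom.hom = LinearMap.ker π.hom.hom}

/-- For full additive subcategories `C`, `C'` of `mod A`:  `⟨C⟩ ⋄ ⟨C'⟩ = ⟨C ⋄ C'⟩`. -/
theorem diamond_factorClass_eq (C C' : Set (FGModuleCat A))
    (hisoC : ∀ {M N : FGModuleCat A}, (M ≅ N) → M ∈ C → N ∈ C)
    (hisoC' : ∀ {M N : FGModuleCat A}, (M ≅ N) → M ∈ C' → N ∈ C')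
    (hsumC : ∀ M N : FGModuleCat A, M ∈ C → N ∈ C →
      ∀ (P : FGModuleCat A) (p₁ : P ⟶ M) (p₂ : P ⟶ N) (i₁ : M ⟶ P) (i₂ : N ⟶ P),
        i₁ ≫ p₁ = 𝟙 M → i₂ ≫ p₂ = 𝟙 N → p₁ ≫ i₁ + p₂ ≫ i₂ = 𝟙 P → P ∈ C)
    (hsumC' : ∀ M N : FGModuleCat A, M ∈ C' → N ∈ C' →
      ∀ (P : FGModuleCat A) (p₁ : P ⟶ M) (p₂ : P ⟶ N) (i₁ : M ⟶ P) (i₂ : N ⟶ P),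
        i₁ ≫ p₁ = 𝟙 M → i₂ ≫ p₂ = 𝟙 N → p₁ ≫ i₁ + p₂ ≫ i₂ = 𝟙 P → P ∈ C')
    (hzeroC : ∀ Z : FGModuleCat A, Subsingleton Z → Z ∈ C)
    (hzeroC' : ∀ Z : FGModuleCat A, Subsingleton Z → Z ∈ C') :
    ∀ M N : FGModuleCat A,
      diamondClass A (factorClass A C) (factorClass A C') M N =
        factorClass A (objDiamond A C C') M N  := by
  intro X Y
  haveI : ∀ Z : FGModuleCat A, Module.Finite A Z.obj := fun Z => Z.property
  ext f
  constructor
  · rintro ⟨L, Mm, Nn, ι, π, h, g, hinj, hsurj, hrange, hf,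
      ⟨W, hW, u, v, huv⟩, ⟨V, hV, s, t, hst⟩⟩
    -- the pullback of `π` and `v`, as a submodule of `Mm × W`
    set φ : (↥Mm × ↥W) →ₗ[A] ↥Nn :=
      (π.hom.hom : ↥Mm →ₗ[A] ↥Nn).comp (LinearMap.fst A ↥Mm ↥W) -
        (v.hom.hom : ↥W →ₗ[A] ↥Nn).comp (LinearMap.snd A ↥Mm ↥W) with hφ
    set P : Submodule A (↥Mm × ↥W) := LinearMap.ker φ with hPdef
    have memP : ∀ p : ↥Mm × ↥W, p ∈ P ↔ π p.1 = v p.2 := by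
      intro p
      rw [hPdef, LinearMap.mem_ker]
      show π p.1 - v p.2 = 0 ↔ _
      rw [sub_eq_zero]
    have hι0 : ∀ l : ↥L, ((ι l, 0) : ↥Mm × ↥W) ∈ P := by
      intro l
      rw [memP]
      have hl : (ι l) ∈ LinearMap.ker π.hom.hom := by rw [← hrange]; exact ⟨l, rfl⟩
      show π (ι l) = v 0
      rw [map_zero]
      exact hl
    -- `P` is finitely generated, being an extension of `W` by the image of `L`
    haveI : Module.Finite A ↥P := by
      rw [Module.Finite.iff_fg]
      apply Submodule.fg_of_fg_map_of_fg_inf_ker (LinearMap.snd A ↥Mm ↥W)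
      · have htop : P.map (LinearMap.snd A ↥Mm ↥W) = ⊤ := by
          rw [eq_top_iff]
          rintro w -
          obtain ⟨m, hm⟩ := hsurj (v w)
          exact ⟨(m, w), (memP _).2 hm, rfl⟩
        rw [htop]
        exact Module.finite_def.mp inferInstance
      · have hker : P ⊓ LinearMap.ker (LinearMap.snd A ↥Mm ↥W)
            = LinearMap.range ((LinearMap.inl A ↥Mm ↥W).comp (ι.hom.hom : ↥L →ₗ[A] ↥Mm)) := by
          ext p
          constructor
          · rintro ⟨hp1, hp2⟩
            have h2 : p.2 = 0 := hp2
            have h1 : π p.1 = 0 := by rw [(memP p).1 hp1, h2, map_zero]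
            have hmem : p.1 ∈ LinearMap.range (ι.hom.hom : ↥L →ₗ[A] ↥Mm) := by
              rw [hrange]; exact h1
            obtain ⟨l, hl⟩ := hmem
            refine ⟨l, ?_⟩
            simp only [LinearMap.coe_comp, Function.comp_apply, LinearMap.inl_apply]
            exact Prod.ext hl h2.symm
          · rintro ⟨l, rfl⟩
            exact ⟨hι0 l, rfl⟩
        rw [hker, LinearMap.range_eq_map]
        exact (Module.finite_def.mp inferInstance).map _
    -- the pushout of the resulting sequence along `s : L → V`
    set ιP : ↥L →ₗ[A] ↥P :=
      LinearMap.codRestrict P ((LinearMap.inl A ↥Mm ↥W).comp (ι.hom.hom : ↥L →ₗ[A] ↥Mm)) hι0 with hιP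
    set θ : ↥L →ₗ[A] ↥V × ↥P := LinearMap.prod (s.hom.hom : ↥L →ₗ[A] ↥V) (-ιP) with hθ
    set K : Submodule A (↥V × ↥P) := LinearMap.range θ with hKdef
    let Q := (↥V × ↥P) ⧸ K
    haveI : Module.Finite A Q :=
      Module.Finite.of_surjective K.mkQ (Submodule.mkQ_surjective K)
    let pW : ↥P →ₗ[A] ↥W := (LinearMap.snd A ↥Mm ↥W).comp P.subtype
    let pM : ↥P →ₗ[A] ↥Mm := (LinearMap.fst A ↥Mm ↥W).comp P.subtype
    have hKπ : K ≤ LinearMap.ker (pW.comp (LinearMap.snd A ↥V ↥P)) := by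
      rintro _ ⟨l, rfl⟩
      simp [hθ, hιP, pW]
      rfl
    let πQ : Q →ₗ[A] ↥W := K.liftQ (pW.comp (LinearMap.snd A ↥V ↥P)) hKπ
    have hKg : K ≤ LinearMap.ker ((t.hom.hom : ↥V →ₗ[A] ↥Y).comp (LinearMap.fst A ↥V ↥P)
        + (g.hom.hom : ↥Mm →ₗ[A] ↥Y).comp (pM.comp (LinearMap.snd A ↥V ↥P))) := by
      rintro _ ⟨l, rfl⟩
      have hstl : t (s l) = g (ι l) := ConcreteCategory.congr_hom hst l
      rw [LinearMap.mem_ker]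
      show t (s l) + g (pM (-ιP l)) = 0
      rw [map_neg, map_neg]
      have hpm : pM (ιP l) = ι l := rfl
      rw [hpm, hstl, add_neg_cancel]
    let gQ : Q →ₗ[A] ↥Y := K.liftQ _ hKg
    have hXP : ∀ x : ↥X, ((h x, u x) : ↥Mm × ↥W) ∈ P := by
      intro x
      rw [memP]
      exact (ConcreteCategory.congr_hom huv x).symm
    let hP' : ↥X →ₗ[A] ↥P :=
      LinearMap.codRestrict P (LinearMap.prod (h.hom.hom : ↥X →ₗ[A] ↥Mm) (u.hom.hom : ↥X →ₗ[A] ↥W)) hXP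
    let hQ : ↥X →ₗ[A] Q := K.mkQ.comp ((LinearMap.inr A ↥V ↥P).comp hP')
    let ιQ : ↥V →ₗ[A] Q := K.mkQ.comp (LinearMap.inl A ↥V ↥P)
    let hQc : X ⟶ FGModuleCat.of A Q := FGModuleCat.ofHom hQ
    let gQc : FGModuleCat.of A Q ⟶ Y := FGModuleCat.ofHom gQ
    refine ⟨FGModuleCat.of A Q, ⟨V, W, FGModuleCat.ofHom ιQ, FGModuleCat.ofHom πQ, hV, hW, ?_, ?_, ?_⟩, hQc, gQc, ?_⟩
    · -- injectivity of `ιQ`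
      refine (injective_iff_map_eq_zero ιQ).mpr fun a ha => ?_
      have hmem : ((a, 0) : ↥V × ↥P) ∈ K := by
        have : K.mkQ (a, 0) = 0 := ha
        rwa [Submodule.mkQ_apply, Submodule.Quotient.mk_eq_zero] at this
      obtain ⟨l, hl⟩ := hmem
      have h2 : ιP l = 0 := by
        have := congrArg Prod.snd hl
        simp only [hθ, LinearMap.prod_apply, Function.prod_apply, LinearMap.neg_apply] at this
        rw [← neg_neg (ιP l), this, neg_zero]
      have h3 : (ι.hom.hom : ↥L →ₗ[A] ↥Mm) l = 0 := by
        have := congrArg (fun p : ↥P => (p : ↥Mm × ↥W).1) h2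
        exact this
      have hl0 : l = 0 := hinj (by rw [map_zero]; exact h3)
      have h1 : s l = a := congrArg Prod.fst hl
      rw [← h1, hl0, map_zero]
    · -- surjectivity of `πQ`
      intro w
      obtain ⟨m, hm⟩ := hsurj (v w)
      refine ⟨K.mkQ (0, ⟨(m, w), (memP _).2 hm⟩), ?_⟩
      show (pW.comp (LinearMap.snd A ↥V ↥P)) (0, ⟨(m, w), (memP _).2 hm⟩) = w
      rfl
    · -- exactness in the middle
      ext q
      obtain ⟨⟨a0, p0⟩, rfl⟩ := Submodule.mkQ_surjective K q
      simp only [LinearMap.mem_range, LinearMap.mem_ker]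
      constructor
      · rintro ⟨a, ha⟩
        rw [← ha]
        show pW 0 = 0
        simp [pW]
      · intro hq
        have hw : (p0 : ↥Mm × ↥W).2 = 0 := hq
        have hm0 : π (p0 : ↥Mm × ↥W).1 = 0 := by
          rw [(memP _).1 p0.2, hw, map_zero]
        have hmem : (p0 : ↥Mm × ↥W).1 ∈ LinearMap.range (ι.hom.hom : ↥L →ₗ[A] ↥Mm) := by
          rw [hrange]; exact hm0
        obtain ⟨l, hl⟩ := hmem
        refine ⟨a0 + s l, ?_⟩
        show K.mkQ (a0 + s l, 0) = K.mkQ (a0, p0)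
        rw [Submodule.mkQ_apply, Submodule.mkQ_apply, Submodule.Quotient.eq]
        refine ⟨l, ?_⟩
        have hp0 : ιP l = p0 := by
          apply Subtype.ext
          exact Prod.ext hl hw.symm
        rw [hθ, Prod.mk_sub_mk]
        simp only [LinearMap.prod_apply, Function.prod_apply, LinearMap.neg_apply, hp0,
          add_sub_cancel_left, zero_sub]
        rfl
    · -- the factorization of `f`
      show hQc ≫ gQc = f
      apply ConcreteCategory.hom_ext
      intro x
      show gQ (hQ x) = f x
      have h2 : f x = g (h x) := ConcreteCategory.congr_hom hf x
      rw [h2]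
      show t 0 + g (h x) = g (h x)
      rw [map_zero, zero_add]
  · rintro ⟨Z, ⟨L, Nn, ι, π, hL, hN, hinj, hsurj, hrange⟩, a, b, hab⟩
    exact ⟨L, Z, Nn, ι, π, a, b, hinj, hsurj, hrange, hab.symm,
      ⟨Nn, hN, a ≫ π, 𝟙 Nn, Category.comp_id _⟩,
      ⟨L, hL, 𝟙 L, ι ≫ b, Category.id_comp _⟩⟩
end
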